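/- arXiv:2502.11299 — 3 statements merged into one kernel-verified Lean document; each statement's English description precedes it below -/
import Mathlib

section
/- In any run of the grassroots cryptocurrency transition system, for every agent p, the total number of p-coins present across all agents' holdings in the final configuration equals the total number of p-coins minted by p during the run (swaps preserve the total count of each coin type). -/
/-- Atomic transactions of the grassroots cryptocurrency system. -/
inductive Tx (P : Type*) where
  | mint (p : P) (k : ℕ)
  | swap (p q : P) (x y : Multiset P)

/-- `TxStep t c c'` : the transaction `t` transforms configuration `c` into `c'`. -/
def TxStep {P : Type*} [DecidableEq P] : Tx P → (P → Multiset P) → (P → Multiset P) → Prop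
  | Tx.mint p k, c, c' =>
      0 < k ∧ c' p = c p + Multiset.replicate k p ∧ ∀ r, r ≠ p → c' r = c r
  | Tx.swap p q x y, c, c' =>
      p ≠ q ∧ x ≤ c p ∧ y ≤ c q ∧
      c' p = c p + y - x ∧ c' q = c q + x - y ∧
      ∀ r, r ≠ p → r ≠ q → c' r = c r

/-- A run: from `c`, executing the list of transactions `ts`, reaching `c'`. -/
inductive TxRun {P : Type*} [DecidableEq P] : (P → Multiset P) → List (Tx P) → (P → Multiset P) → Prop
  | nil (c) : TxRun c [] c
  | cons {c c' c'' t ts} : TxStep t c c' → TxRun c' ts c'' → TxRun c (t :: ts) c''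

/-- Number of `p`-coins minted by the transaction `t` (by `p`). -/
def mintedBy {P : Type*} [DecidableEq P] (t : Tx P) (p : P) : ℕ :=
  match t with
  | Tx.mint q k => if q = p then k else 0
  | Tx.swap _ _ _ _ => 0

lemma gc_step_sum {P : Type*} [Fintype P] [DecidableEq P]
    {t : Tx P} {c c' : P → Multiset P} (h : TxStep t c c') (p : P) :
    (∑ q : P, (c' q).count p) = (∑ q : P, (c q).count p) + mintedBy t p := by
  cases t with
  | mint p0 k =>
    obtain ⟨hk, h1, h2⟩ := h
    have hfun : ∀ q, (c' q).count p
        = (c q).count p + (if q = p0 then (if p0 = p then k else 0) else 0) := by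
      intro q
      by_cases hq : q = p0
      · subst hq
        rw [h1]
        simp [Multiset.count_replicate, eq_comm]
      · simp [h2 q hq, hq]
    rw [Finset.sum_congr rfl (fun q _ => hfun q), Finset.sum_add_distrib,
      Finset.sum_ite_eq' Finset.univ p0]
    simp [mintedBy]
  | swap p0 q0 x y =>
    obtain ⟨hpq, hx, hy, h1, h2, h3⟩ := h
    have hxa : x.count p ≤ (c p0).count p := Multiset.count_le_of_le p hx
    have hya : y.count p ≤ (c q0).count p := Multiset.count_le_of_le p hy
    have hsub : ({p0, q0} : Finset P) ⊆ Finset.univ := Finset.subset_univ _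
    have split : ∀ f : P → ℕ, ∑ q : P, f q
        = ∑ q ∈ Finset.univ \ {p0, q0}, f q + (f p0 + f q0) := by
      intro f
      rw [← Finset.sum_pair hpq, Finset.sum_sdiff hsub]
    rw [split, split (fun q => (c q).count p)]
    have htail : ∀ r ∈ Finset.univ \ ({p0, q0} : Finset P),
        (c' r).count p = (c r).count p := by
      intro r hr
      simp only [Finset.mem_sdiff, Finset.mem_insert, Finset.mem_singleton] at hr
      rw [h3 r (fun h => hr.2 (Or.inl h)) (fun h => hr.2 (Or.inr h))]
    rw [Finset.sum_congr rfl htail]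
    have e1 : (c' p0).count p = (c p0).count p + y.count p - x.count p := by
      rw [h1]; simp [Multiset.count_sub]
    have e2 : (c' q0).count p = (c q0).count p + x.count p - y.count p := by
      rw [h2]; simp [Multiset.count_sub]
    simp only [mintedBy, e1, e2]
    omega

lemma gc_run_sum {P : Type*} [Fintype P] [DecidableEq P]
    {ts : List (Tx P)} {c0 c : P → Multiset P}
    (hrun : TxRun c0 ts c) (p : P) :
    (∑ q : P, (c q).count p)
      = (∑ q : P, (c0 q).count p) + (ts.map (fun t => mintedBy t p)).sum := by
  induction hrun with
  | nil c => simp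
  | cons hstep _ ih =>
    rw [ih, gc_step_sum hstep p]
    simp
    ring

/-- Conservation of money: in any run from the all-empty configuration, the total
number of `p`-coins held across all agents in the final configuration equals the
total number of `p`-coins minted by `p` during the run. -/
theorem gc_conservation {P : Type*} [Fintype P] [DecidableEq P]
    (ts : List (Tx P)) (c : P → Multiset P)
    (hrun : TxRun (fun _ => (0 : Multiset P)) ts c) (p : P) :
    (∑ q : P, (c q).count p) = (ts.map (fun t => mintedBy t p)).sum := by
  simpa using gc_run_sum hrun p
end

section
/- Closure is transitive: for sets of agents P ⊂ P' and a set R of transactions each over participants contained in P, the P'-closure of the P-closure of R equals the P'-closure of R, i.e., (R↑P)↑P' = R↑P'. -/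
/-- A configuration over a set of agents `P` with local states in `L`. -/
def Config {A : Type*} (L : Type*) (P : Set A) := ↥P → L

/-- The projection of a configuration over `P'` onto a subset `P`. -/
def restrictCfg {A L : Type*} {P P' : Set A} (h : P ⊆ P') (c : Config L P') :
    Config L P := fun p => c ⟨p.1, h p.2⟩

/-- The `P`-txClosure of a transaction (a pair of configurations over participants
`Q ⊆ P`): all transitions over `P` agreeing with the transaction on `Q` and
keeping all agents of `P \ Q` stationary. -/
def txClosure {A L : Type*} {Q P : Set A} (h : Q ⊆ P)
    (t : Config L Q × Config L Q) : Set (Config L P × Config L P) :=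
  { dd | (∀ (p : A) (hq : p ∈ Q),
            dd.1 ⟨p, h hq⟩ = t.1 ⟨p, hq⟩ ∧ dd.2 ⟨p, h hq⟩ = t.2 ⟨p, hq⟩) ∧
         ∀ (p : A) (hp : p ∈ P), p ∉ Q → dd.2 ⟨p, hp⟩ = dd.1 ⟨p, hp⟩ }

/-- The `P'`-txClosure of a set of transitions over `P ⊆ P'`. -/
def setClosure {A L : Type*} {P P' : Set A} (h : P ⊆ P')
    (T : Set (Config L P × Config L P)) : Set (Config L P' × Config L P') :=
  { dd | ∃ t ∈ T, dd ∈ txClosure h t }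

/-- The `P`-txClosure of a set `R` of transactions, each with its own participant
set `t.1` contained in `P`. -/
def RClosure {A L : Type*} (R : Set (Σ Q : Set A, Config L Q × Config L Q))
    (P : Set A) : Set (Config L P × Config L P) :=
  { dd | ∃ t ∈ R, ∃ h : t.1 ⊆ P, dd ∈ txClosure h t.2 }

/-- Closure transitivity: `(R↑P)↑P' = R↑P'` for a set `R` of transactions each
over participants contained in `P ⊂ P'`. -/
theorem closure_transitivity {A L : Type*} {P P' : Set A}
    (R : Set (Σ Q : Set A, Config L Q × Config L Q))
    (hne : ∀ t ∈ R, t.2.1 ≠ t.2.2)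
    (hR : ∀ t ∈ R, t.1 ⊆ P) (hsub : P ⊂ P') :
    setClosure hsub.subset (RClosure R P) = RClosure R P' := by
  ext dd
  constructor
  · rintro ⟨t, ⟨r, hrR, hQP, hagree, hstat⟩, hdagree, hdstat⟩
    refine ⟨r, hrR, hQP.trans hsub.subset, ?_, ?_⟩
    · intro p hq
      obtain ⟨h1, h2⟩ := hdagree p (hQP hq)
      obtain ⟨h1', h2'⟩ := hagree p hq
      exact ⟨h1.trans h1', h2.trans h2'⟩
    · intro p hp hpq
      by_cases hpP : p ∈ P
      · have h1 := (hdagree p hpP).1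
        have h2 := (hdagree p hpP).2
        rw [h2, h1, hstat p hpP hpq]
      · exact hdstat p hp hpP
  · rintro ⟨r, hrR, hQP', hagree, hstat⟩
    have hQP : r.1 ⊆ P := hR r hrR
    refine ⟨(restrictCfg hsub.subset dd.1, restrictCfg hsub.subset dd.2),
      ⟨r, hrR, hQP, ?_, ?_⟩, ?_, ?_⟩
    · intro p hq
      exact hagree p hq
    · intro p hp hpq
      exact hstat p (hsub.subset hp) hpq
    · intro p hp
      exact ⟨rfl, rfl⟩
    · intro p hp hpP
      exact hstat p hp (fun hq => hpP (hQP hq))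
end

section
/- In any run of the grassroots federation transition system, the underlying federation graph of every reachable configuration is acyclic. -/
/-- A federation graph: a set of nodes (community identifiers) and a set of
directed edges. -/
structure FGraph (ν : Type*) where
  V : Set ν
  E : Set (ν × ν)

/-- The edge relation of a federation graph. -/
def edgeRel {ν : Type*} (G : FGraph ν) (a b : ν) : Prop := (a, b) ∈ G.E

/-- `reach G a b`: there is a directed path in `G` from `a` to `b`. -/
def reach {ν : Type*} (G : FGraph ν) : ν → ν → Prop :=
  Relation.ReflTransGen (edgeRel G)

/-- Well-formedness: both endpoints of every edge are nodes. -/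
def FGraph.WF {ν : Type*} (G : FGraph ν) : Prop :=
  ∀ e ∈ G.E, e.1 ∈ G.V ∧ e.2 ∈ G.V

/-- Acyclicity: no directed cycle. -/
def FGraph.Acyclic {ν : Type*} (G : FGraph ν) : Prop :=
  ∀ a, ¬ Relation.TransGen (edgeRel G) a a

/-- The community subgraph `G_v`: `v`, all nodes adjacent to `v`, and all
edges incident with `v`. -/
def commSub {ν : Type*} (G : FGraph ν) (v : ν) : FGraph ν :=
  ⟨{v} ∪ { u | (u, v) ∈ G.E ∨ (v, u) ∈ G.E },
   { e ∈ G.E | e.1 = v ∨ e.2 = v }⟩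

/-- The personal subgraph `G_p` of agent `p`: the union of the community
subgraphs `G_v` over all communities `v` of which `p` is a member (i.e. nodes
`v` with a directed path from `v` to `p`). -/
def personal {ν : Type*} (G : FGraph ν) (p : ν) : FGraph ν :=
  ⟨⋃ v ∈ { v | v ∈ G.V ∧ reach G v p }, (commSub G v).V,
   ⋃ v ∈ { v | v ∈ G.V ∧ reach G v p }, (commSub G v).E⟩

/-- Graph-level steps of the grassroots federation system, over community
identifiers totally ordered by `≻` (here `<`-reversed: `g < f` means `f ≻ g`).
Federate adds a fresh parent node `f ≻ v` with edge `f → v`; Join adds an edge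
`f → g` only if `f ≻ g`; Leave removes an existing edge. -/
inductive FedGStep {ν : Type*} [LinearOrder ν] : FGraph ν → FGraph ν → Prop
  | federate (G : FGraph ν) (v f : ν) (hv : v ∈ G.V) (hf : f ∉ G.V)
      (hord : v < f) : FedGStep G ⟨G.V ∪ {f}, G.E ∪ {(f, v)}⟩
  | join (G : FGraph ν) (f g : ν) (hf : f ∈ G.V) (hg : g ∈ G.V)
      (hord : g < f) : FedGStep G ⟨G.V, G.E ∪ {(f, g)}⟩
  | leave (G : FGraph ν) (f g : ν) (he : (f, g) ∈ G.E) :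
      FedGStep G ⟨G.V, G.E \ {(f, g)}⟩

/-- In any run of the grassroots federation system from the edgeless graph on
the singleton communities, every edge `f → g` of the reachable federation
graph satisfies `f ≻ g`, and hence the graph is acyclic. -/
theorem federation_acyclic {ν : Type*} [LinearOrder ν] (P : Set ν)
    (G : FGraph ν)
    (hrun : Relation.ReflTransGen FedGStep ⟨P, ∅⟩ G) :
    (∀ e ∈ G.E, e.2 < e.1) ∧ G.Acyclic := by

  have hinv : ∀ e ∈ G.E, e.2 < e.1 := by
    induction hrun with
    | refl => intro e he; exact absurd he (by simp)
    | tail _ hstep ih =>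
      cases hstep with
      | federate v f hv hf hord =>
        intro e he
        rcases he with h | h
        · exact ih e h
        · simp only [Set.mem_singleton_iff] at h; subst h; exact hord
      | join f g hf hg hord =>
        intro e he
        rcases he with h | h
        · exact ih e h
        · simp only [Set.mem_singleton_iff] at h; subst h; exact hord
      | leave f g he' =>
        intro e he; exact ih e he.1
  refine ⟨hinv, ?_⟩
  intro a hcyc
  have : ∀ b, Relation.TransGen (edgeRel G) a b → b < a := by
    intro b hb
    induction hb with
    | single h => exact hinv _ h
    | tail _ h ih => exact lt_trans (hinv _ h) ih
  exact lt_irrefl a (this a hcyc)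
end
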